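/- arXiv:2211.08147 — 7 statements merged into one kernel-verified Lean document; each statement's English description precedes it below -/
import Mathlib

section
/- Let a, b ∈ ℚ and let W be the Weierstrass curve y² + a·x·y + b·y = x³ over ℚ (i.e. the Weierstrass curve with coefficients a₁ = a, a₂ = 0, a₃ = b, a₄ = 0, a₆ = 0). Assume its discriminant Δ = b³·(a³ − 27b) is nonzero. Then the affine point (0, 0) lies on W and has order exactly 3 in the group of rational points W(ℚ). -/
/-!
When `a₂ = a₄ = a₆ = 0` the tangent line to `W` at `(0, 0)` is `y = 0`, which meets the curve
`y² + a₁xy + a₃y = x³` only where `x³ = 0`. So `(0, 0)` is a flex: `2P = -P`, hence `3P = 0`,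
and `P ≠ 0` forces its order to be the prime `3`. Nonsingularity of `(0, 0)` comes from `Δ ≠ 0`.
-/

namespace WeierstrassCurve.Affine

variable {F : Type*} [Field F] {W : Affine F}

lemma zero_ne_negY_zero_zero (h : W.Nonsingular 0 0) (h₄ : W.a₄ = 0) : (0 : F) ≠ W.negY 0 0 := by
  have h₃ : W.a₃ ≠ 0 := (nonsingular_zero.mp h).2.resolve_right (not_not.mpr h₄)
  simpa [negY] using h₃

variable [DecidableEq F]

lemma slope_zero_zero_zero_zero (h : W.Nonsingular 0 0) (h₄ : W.a₄ = 0) :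
    W.slope 0 0 0 0 = 0 := by
  rw [slope_of_Y_ne rfl (zero_ne_negY_zero_zero h h₄)]
  simp [h₄]

namespace Point

lemma some_zero_zero_add_self (h : W.Nonsingular 0 0) (h₂ : W.a₂ = 0) (h₄ : W.a₄ = 0) :
    some 0 0 h + some 0 0 h = -some 0 0 h := by
  rw [add_self_of_Y_ne (zero_ne_negY_zero_zero h h₄), neg_some, some.injEq]
  simp [addX, addY, negAddY, slope_zero_zero_zero_zero h h₄, h₂]

lemma addOrderOf_some_zero_zero (h : W.Nonsingular 0 0) (h₂ : W.a₂ = 0) (h₄ : W.a₄ = 0) :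
    addOrderOf (some 0 0 h) = 3 := by
  have h3 : 3 • some 0 0 h = 0 := by
    rw [succ_nsmul, two_nsmul, some_zero_zero_add_self h h₂ h₄, neg_add_cancel]
  exact addOrderOf_eq_prime h3 (some_ne_zero h)

end Point

end WeierstrassCurve.Affine

open WeierstrassCurve.Affine in
theorem point_zero_zero_has_order_three (a b : ℚ)
    (W : WeierstrassCurve ℚ) (hW : W = ⟨a, 0, b, 0, 0⟩)
    (hΔ : W.Δ ≠ 0) :
    W.toAffine.Equation 0 0 ∧
      ∃ h : W.toAffine.Nonsingular 0 0,
        addOrderOf (WeierstrassCurve.Affine.Point.some _ _ h) = 3 := by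
  have heq : W.toAffine.Equation 0 0 := equation_zero.mpr (hW ▸ rfl)
  have hns := (equation_iff_nonsingular_of_Δ_ne_zero hΔ).mp heq
  exact ⟨heq, hns, Point.addOrderOf_some_zero_zero hns (hW ▸ rfl) (hW ▸ rfl)⟩
end

section
/- Let E be an elliptic curve over ℚ admitting a rational point of order 3. Then there exist integers a and b with b > 0 such that for every prime q one has ¬(q ∣ a ∧ q³ ∣ b), and such that E is isomorphic over ℚ (via an admissible change of Weierstrass variables) to the Weierstrass curve y² + a·x·y + b·y = x³; in particular the discriminant b³·(a³ − 27b) of this equation is nonzero. -/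
/-!
A rational point `P` of order 3 is a flex: `2P = -P` says that the tangent line at `P` meets the
curve only at `P`. Moving `P` to the origin and its tangent to `y = 0` kills `a₂`, `a₄` and `a₆`.
The remaining changes of variables rescale `(a₁, a₃)` to `(w a₁, w³ a₃)`; among the integral pairs
reached this way with `a₃ > 0`, one with `a₃` least cannot be rescaled by `1 / q` for a prime `q`.
-/

open WeierstrassCurve

namespace WeierstrassCurve

abbrev ofA₁A₃ {R : Type*} [CommRing R] (a₁ a₃ : R) : WeierstrassCurve R := ⟨a₁, 0, a₃, 0, 0⟩

section CommRing

variable {R : Type*} [CommRing R]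

lemma Δ_ofA₁A₃ (a₁ a₃ : R) : (ofA₁A₃ a₁ a₃).Δ = a₃ ^ 3 * (a₁ ^ 3 - 27 * a₃) := by
  simp only [Δ, b₂, b₄, b₆, b₈]
  ring

lemma isUnit_of_smul_eq_ofA₁A₃ {W : WeierstrassCurve R} [W.IsElliptic] {C : VariableChange R}
    {a₁ a₃ : R} (h : C • W = ofA₁A₃ a₁ a₃) : IsUnit (a₃ ^ 3 * (a₁ ^ 3 - 27 * a₃)) := by
  simpa only [h, Δ_ofA₁A₃] using (C • W).isUnit_Δ

lemma scaling_smul_ofA₁A₃ (u : Rˣ) (a₁ a₃ : R) :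
    (⟨u, 0, 0, 0⟩ : VariableChange R) • ofA₁A₃ a₁ a₃ = ofA₁A₃ (u⁻¹ * a₁) (u⁻¹ ^ 3 * a₃) := by
  ext <;> simp [variableChange_a₁, variableChange_a₂, variableChange_a₃, variableChange_a₄,
    variableChange_a₆]

end CommRing

section Field

variable {F : Type*} [Field F]

lemma exists_smul_eq_ofA₁A₃_mul {W : WeierstrassCurve F} {a₁ a₃ w : F} (hw : w ≠ 0)
    (h : ∃ C : VariableChange F, C • W = ofA₁A₃ a₁ a₃) :
    ∃ C : VariableChange F, C • W = ofA₁A₃ (w * a₁) (w ^ 3 * a₃) := by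
  obtain ⟨C, hC⟩ := h
  refine ⟨⟨(Units.mk0 w hw)⁻¹, 0, 0, 0⟩ * C, ?_⟩
  rw [mul_smul, hC, scaling_smul_ofA₁A₃, inv_inv, Units.val_mk0]

variable [DecidableEq F] {W : Affine F}

lemma smul_eq_ofA₁A₃_of_flex {x y : F} (hxy : W.Equation x y) (hy : y ≠ W.negY x y)
    (hflex : W.addX x x (W.slope x x y y) = x) :
    (⟨1, x, W.slope x x y y, y⟩ : VariableChange F) • W =
      ofA₁A₃ (W.a₁ + 2 * W.slope x x y y) (W.a₃ + x * W.a₁ + 2 * y) := by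
  have htangent : W.slope x x y y * (y - W.negY x y) =
      3 * x ^ 2 + 2 * W.a₂ * x + W.a₄ - W.a₁ * y := by
    rw [Affine.slope_of_Y_ne rfl hy, div_mul_cancel₀ _ (sub_ne_zero.mpr hy)]
  rw [Affine.equation_iff] at hxy
  simp only [Affine.addX] at hflex
  simp only [Affine.negY] at htangent
  ext <;> simp only [variableChange_a₁, variableChange_a₂, variableChange_a₃,
    variableChange_a₄, variableChange_a₆, inv_one, Units.val_one, one_pow, one_mul]
  · linear_combination -hflex
  · linear_combination -htangent
  · linear_combination -hxy

lemma exists_smul_eq_ofA₁A₃_of_addOrderOf_eq_three {P : W.Point} (hP : addOrderOf P = 3) :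
    ∃ (C : VariableChange F) (a₁ a₃ : F), C • W = ofA₁A₃ a₁ a₃ := by
  have h3 : 3 • P = 0 := hP ▸ addOrderOf_nsmul_eq_zero P
  have hneg : P + P = -P := add_eq_zero_iff_eq_neg.mp (by rwa [succ_nsmul, two_nsmul] at h3)
  cases P with
  | zero => simp [← Affine.Point.zero_def] at hP
  | @some x y h =>
    have hy : y ≠ W.negY x y := by
      intro hy
      have h2 : 2 • Affine.Point.some x y h = 0 := by
        rw [two_nsmul]
        exact Affine.Point.add_self_of_Y_eq hy
      exact absurd (addOrderOf_dvd_of_nsmul_eq_zero h2) (by rw [hP]; norm_num)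
    rw [Affine.Point.add_self_of_Y_ne hy, Affine.Point.neg_some] at hneg
    injection hneg with hflex
    exact ⟨_, _, _, smul_eq_ofA₁A₃_of_flex h.1 hy hflex⟩

end Field

end WeierstrassCurve

section Scaling

variable (S : ℚ → ℚ → Prop)

lemma exists_int_pos_of_scaling_closed (hS : ∀ w a b, w ≠ 0 → S a b → S (w * a) (w ^ 3 * b))
    {a₀ b₀ : ℚ} (h : S a₀ b₀) (hb₀ : b₀ ≠ 0) : ∃ a b : ℤ, 0 < b ∧ S a b := by
  have hnum : b₀.num ≠ 0 := Rat.num_ne_zero.mpr hb₀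
  have hw : (b₀.num * a₀.den * b₀.den : ℚ) ≠ 0 := by positivity
  -- the factor `b₀.num` makes `w ^ 3 * b₀` a positive multiple of `b₀.num ^ 4`
  refine ⟨b₀.num * a₀.num * b₀.den, b₀.num ^ 4 * a₀.den ^ 3 * b₀.den ^ 2, by positivity, ?_⟩
  convert hS _ a₀ b₀ hw h using 1 <;> push_cast
  · linear_combination (-(b₀.num : ℚ) * b₀.den) * Rat.mul_den_eq_num a₀
  · linear_combination (-(b₀.num : ℚ) ^ 3 * a₀.den ^ 3 * b₀.den ^ 2) * Rat.mul_den_eq_num b₀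

lemma exists_int_minimal_of_scaling_closed (hS : ∀ w a b, w ≠ 0 → S a b → S (w * a) (w ^ 3 * b))
    {a₀ b₀ : ℚ} (h : S a₀ b₀) (hb₀ : b₀ ≠ 0) :
    ∃ a b : ℤ, 0 < b ∧ (∀ q : ℕ, q.Prime → ¬((q : ℤ) ∣ a ∧ (q : ℤ) ^ 3 ∣ b)) ∧ S a b := by
  obtain ⟨a₁, b₁, hb₁, h₁⟩ := exists_int_pos_of_scaling_closed S hS h hb₀
  obtain ⟨⟨a, b⟩, ⟨hb, hab⟩, hmin⟩ := (measure fun p : ℤ × ℤ => p.2.toNat).wf.has_min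
    {p | 0 < p.2 ∧ S p.1 p.2} ⟨(a₁, b₁), hb₁, h₁⟩
  refine ⟨a, b, hb, ?_, hab⟩
  rintro q hq ⟨⟨c, rfl⟩, ⟨d, rfl⟩⟩
  have hq0 : (q : ℚ) ≠ 0 := by exact_mod_cast hq.ne_zero
  have hq3 : (1 : ℤ) < q ^ 3 := one_lt_pow₀ (by exact_mod_cast hq.one_lt) three_ne_zero
  have hd : 0 < d := pos_of_mul_pos_right hb (by positivity)
  have hlt : d < q ^ 3 * d := lt_mul_left hd hq3
  refine hmin ⟨c, d⟩ ⟨hd, ?_⟩ (show d.toNat < (q ^ 3 * d).toNat by omega)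
  convert hS (q : ℚ)⁻¹ _ _ (inv_ne_zero hq0) hab using 1 <;> push_cast <;> field_simp

end Scaling

theorem exists_normal_form_of_three_torsion (E : WeierstrassCurve ℚ) [E.IsElliptic]
    (hP : ∃ P : E.toAffine.Point, addOrderOf P = 3) :
    ∃ a b : ℤ, 0 < b ∧
      (∀ q : ℕ, q.Prime → ¬((q : ℤ) ∣ a ∧ (q : ℤ) ^ 3 ∣ b)) ∧
      (∃ C : WeierstrassCurve.VariableChange ℚ,
        (C • E : WeierstrassCurve ℚ) = ⟨(a : ℚ), 0, (b : ℚ), 0, 0⟩) ∧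
      (b : ℚ) ^ 3 * ((a : ℚ) ^ 3 - 27 * (b : ℚ)) ≠ 0 := by
  obtain ⟨P, hP⟩ := hP
  obtain ⟨C, a₁, a₃, hC⟩ := exists_smul_eq_ofA₁A₃_of_addOrderOf_eq_three hP
  have ha₃ : a₃ ≠ 0 :=
    (pow_ne_zero_iff three_ne_zero).mp (left_ne_zero_of_mul (isUnit_of_smul_eq_ofA₁A₃ hC).ne_zero)
  obtain ⟨a, b, hb, hmin, C', hC'⟩ := exists_int_minimal_of_scaling_closed
    (fun a b => ∃ C : VariableChange ℚ, C • E = ofA₁A₃ a b)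
    (fun _ _ _ hw => exists_smul_eq_ofA₁A₃_mul hw) ⟨C, hC⟩ ha₃
  exact ⟨a, b, hb, hmin, ⟨C', hC'⟩, (isUnit_of_smul_eq_ofA₁A₃ hC').ne_zero⟩
end

section
/- Let a be an integer and k a natural number. If a² + 3a + 9 = 3^k, then a = 0 or a = 3 or a = −3 or a = −6. -/
theorem eq_pow_three_aux (a : ℤ) (k : ℕ) (h : a ^ 2 + 3 * a + 9 = 3 ^ k) :
    a = 0 ∨ a = 3 ∨ a = -3 ∨ a = -6 := by
  have hall : ∀ x : ZMod 81, x ^ 2 + 3 * x + 9 ≠ 0 := by decide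
  have hk : k ≤ 3 := by
    by_contra hk
    push_neg at hk
    obtain ⟨m, rfl⟩ : ∃ m, k = 4 + m := ⟨k - 4, by omega⟩
    have h81 : ((a : ZMod 81) ^ 2 + 3 * a + 9 = 0) := by
      have hcast := congrArg (Int.cast : ℤ → ZMod 81) h
      push_cast at hcast
      have h34 : (3 : ZMod 81) ^ 4 = 0 := by decide
      rw [hcast, pow_add, h34, zero_mul]
    exact hall _ h81
  have hb : a ^ 2 + 3 * a + 9 ≤ 27 := by
    rw [h]
    calc (3:ℤ) ^ k ≤ 3 ^ 3 := by
          exact pow_le_pow_right₀ (by norm_num) hk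
      _ = 27 := by norm_num
  have h1 : -6 ≤ a := by nlinarith
  have h2 : a ≤ 3 := by nlinarith
  interval_cases k <;> interval_cases a <;> simp_all
end

section
/- Let n be an integer and k a natural number. If n² + n + 1 = 3^k, then n = 0 or n = −1 or n = 1 or n = −2. (In particular, n² + n + 1 is never divisible by 9.) -/
theorem n_sq_add_n_add_one_eq_pow_three (n : ℤ) (k : ℕ) (h : n ^ 2 + n + 1 = 3 ^ k) :
    n = 0 ∨ n = -1 ∨ n = 1 ∨ n = -2 := by
  match k with
  | 0 =>
    have h0 : n * (n + 1) = 0 := by nlinarith [h]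
    rcases mul_eq_zero.mp h0 with h1 | h1
    · exact Or.inl h1
    · exact Or.inr (Or.inl (by linarith))
  | 1 =>
    have h0 : (n - 1) * (n + 2) = 0 := by nlinarith [h]
    rcases mul_eq_zero.mp h0 with h1 | h1
    · exact Or.inr (Or.inr (Or.inl (by linarith)))
    · exact Or.inr (Or.inr (Or.inr (by linarith)))
  | (k + 2) =>
    exfalso
    have h9 : (9 : ℤ) ∣ n ^ 2 + n + 1 := by
      rw [h, pow_add]
      exact Dvd.intro_left (3^k) (by norm_num)
    have hm : ((n : ZMod 9) ^ 2 + n + 1 = 0) := by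
      have := (ZMod.intCast_zmod_eq_zero_iff_dvd _ 9).mpr h9
      push_cast at this
      exact this
    have : ∀ m : ZMod 9, m ^ 2 + m + 1 ≠ 0 := by decide
    exact this _ hm
end

section
/- Let a be an integer with a ∉ {0, 3, −3, −6}. Then there exists a prime number q with q ≠ 3 such that q divides a² + 3a + 9 and q does not divide a + 6. -/
lemma aux_prime_ne_three (n : ℕ) (h2 : 2 ≤ n) (h3 : n ≠ 3) (h9 : ¬ 9 ∣ n) :
    ∃ q : ℕ, q.Prime ∧ q ≠ 3 ∧ q ∣ n := by
  by_cases h : 3 ∣ n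
  · obtain ⟨m, rfl⟩ := h
    have hm1 : m ≠ 1 := by rintro rfl; omega
    have h3m : ¬ 3 ∣ m := fun ⟨k, hk⟩ => h9 ⟨k, by omega⟩
    obtain ⟨q, hq, hqd⟩ := Nat.exists_prime_and_dvd hm1
    exact ⟨q, hq, fun h => h3m (h ▸ hqd), hqd.mul_left 3⟩
  · have hn1 : n ≠ 1 := by omega
    obtain ⟨q, hq, hqd⟩ := Nat.exists_prime_and_dvd hn1
    exact ⟨q, hq, fun he => h (he ▸ hqd), hqd⟩

theorem exists_prime_divisor_ne_three (a : ℤ)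
    (ha : a ≠ 0 ∧ a ≠ 3 ∧ a ≠ -3 ∧ a ≠ -6) :
    ∃ q : ℕ, q.Prime ∧ q ≠ 3 ∧ (q : ℤ) ∣ a ^ 2 + 3 * a + 9 ∧ ¬(q : ℤ) ∣ a + 6 := by
  obtain ⟨h0, h3, hm3, hm6⟩ := ha
  by_cases hdvd : (3 : ℤ) ∣ a
  · obtain ⟨b, rfl⟩ := hdvd
    set M : ℤ := b ^ 2 + b + 1 with hMdef
    have hMpos : (0 : ℤ) < M := by nlinarith [sq_nonneg (2 * b + 1)]
    have hb0 : b ≠ 0 := by rintro rfl; simp at h0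
    have hb1 : b ≠ 1 := by rintro rfl; simp at h3
    have hbm1 : b ≠ -1 := by rintro rfl; norm_num at hm3
    have hbm2 : b ≠ -2 := by rintro rfl; norm_num at hm6
    have hM1 : M ≠ 1 := by
      intro h
      have : b * (b + 1) = 0 := by nlinarith [h]
      rcases mul_eq_zero.1 this with h' | h' <;> omega
    have hM3 : M ≠ 3 := by
      intro h
      have : (b - 1) * (b + 2) = 0 := by nlinarith [h]
      rcases mul_eq_zero.1 this with h' | h' <;> omega
    have h9M : ¬ (9 : ℤ) ∣ M := by
      intro h
      have hz : ((M : ℤ) : ZMod 9) = 0 := (ZMod.intCast_zmod_eq_zero_iff_dvd M 9).2 h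
      rw [hMdef] at hz
      push_cast at hz
      have : ∀ x : ZMod 9, x ^ 2 + x + 1 ≠ 0 := by decide
      exact this _ hz
    set n : ℕ := M.natAbs with hndef
    have hnM : (n : ℤ) = M := Int.natAbs_of_nonneg hMpos.le
    have hn2 : 2 ≤ n := by omega
    have hn3 : n ≠ 3 := by omega
    have hn9 : ¬ 9 ∣ n := fun ⟨k, hk⟩ => h9M ⟨k, by push_cast [← hnM, hk]; ring⟩
    obtain ⟨q, hq, hq3, hqd⟩ := aux_prime_ne_three n hn2 hn3 hn9
    have hqM : (q : ℤ) ∣ M := by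
      rw [← hnM]; exact_mod_cast hqd
    have hq3' : ¬ (q : ℤ) ∣ 3 := by
      intro h
      have : q ∣ 3 := by exact_mod_cast h
      exact hq3 ((Nat.prime_dvd_prime_iff_eq hq Nat.prime_three).1 this)
    refine ⟨q, hq, hq3, ?_, ?_⟩
    · have : (3 * b) ^ 2 + 3 * (3 * b) + 9 = 9 * M := by ring
      rw [this]; exact hqM.mul_left 9
    · intro h
      have hqP : Prime (q : ℤ) := Nat.prime_iff_prime_int.mp hq
      have h' : (q : ℤ) ∣ 3 * (b + 2) := by
        have : 3 * b + 6 = 3 * (b + 2) := by ring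
        rwa [this] at h
      rcases hqP.dvd_mul.1 h' with h'' | h''
      · exact hq3' h''
      · have : (q : ℤ) ∣ 3 := by
          have h3eq : (3 : ℤ) = M - (b + 2) * (b - 1) := by rw [hMdef]; ring
          rw [h3eq]; exact dvd_sub hqM (h''.mul_right _)
        exact hq3' this
  · set N : ℤ := a ^ 2 + 3 * a + 9 with hNdef
    have hNpos : (1 : ℤ) < N := by nlinarith [sq_nonneg (2 * a + 3)]
    set n : ℕ := N.natAbs with hndef
    have hnN : (n : ℤ) = N := Int.natAbs_of_nonneg (by omega)
    have hn1 : n ≠ 1 := by omega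
    obtain ⟨q, hq, hqd⟩ := Nat.exists_prime_and_dvd hn1
    have hqN : (q : ℤ) ∣ N := by rw [← hnN]; exact_mod_cast hqd
    have h3N : ¬ (3 : ℤ) ∣ N := by
      intro h
      have ha2 : (3 : ℤ) ∣ a ^ 2 := by
        have : a ^ 2 = N - 3 * (a + 3) := by rw [hNdef]; ring
        rw [this]; exact dvd_sub h (Dvd.intro _ rfl)
      exact hdvd (Int.prime_three.dvd_of_dvd_pow ha2)
    have hq3 : q ≠ 3 := by
      rintro rfl
      exact h3N (by exact_mod_cast hqN)
    refine ⟨q, hq, hq3, hqN, ?_⟩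
    intro h
    have h27 : (q : ℤ) ∣ 27 := by
      have : (27 : ℤ) = N - (a + 6) * (a - 3) := by rw [hNdef]; ring
      rw [this]; exact dvd_sub hqN (h.mul_right _)
    have : q ∣ 27 := by exact_mod_cast h27
    have hq3d : q ∣ 3 := hq.dvd_of_dvd_pow (show q ∣ 3 ^ 3 by norm_num [this])
    exact hq3 ((Nat.prime_dvd_prime_iff_eq hq Nat.prime_three).1 hq3d)
end

section
/- Let a be an integer and k a natural number. If a² − 9 = 2^k or a² − 9 = −2^k, then a = 1 or a = −1 or a = 5 or a = −5. (Equivalently: (a−3)(a+3) is, up to sign, a power of 2 only for a ∈ {±1, ±5}.) -/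
theorem sq_sub_nine_eq_pow_two (a : ℤ) (k : ℕ)
    (h : a ^ 2 - 9 = 2 ^ k ∨ a ^ 2 - 9 = -(2 ^ k)) :
    a = 1 ∨ a = -1 ∨ a = 5 ∨ a = -5 := by
  have hprod : (a - 3) * (a + 3) = 2 ^ k ∨ (a - 3) * (a + 3) = -(2 ^ k) := by
    have he : (a - 3) * (a + 3) = a ^ 2 - 9 := by ring
    rw [he]; exact h
  have hd1 : (a - 3) ∣ 2 ^ k := by
    rcases hprod with h' | h'
    · exact ⟨a + 3, h'.symm⟩
    · exact dvd_neg.mp ⟨a + 3, h'.symm⟩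
  have hd2 : (a + 3) ∣ 2 ^ k := by
    rcases hprod with h' | h'
    · exact ⟨a - 3, by rw [← h']; ring⟩
    · exact dvd_neg.mp ⟨a - 3, by rw [← h']; ring⟩
  have hn1 : (a - 3).natAbs ∣ 2 ^ k := by
    have := Int.natAbs_dvd_natAbs.mpr hd1
    simp only [Int.natAbs_pow, Int.natAbs_natCast] at this
    exact this
  have hn2 : (a + 3).natAbs ∣ 2 ^ k := by
    have := Int.natAbs_dvd_natAbs.mpr hd2
    simp only [Int.natAbs_pow, Int.natAbs_natCast] at this
    exact this
  obtain ⟨i, hik, hi⟩ := (Nat.dvd_prime_pow Nat.prime_two).mp hn1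
  obtain ⟨j, hjk, hj⟩ := (Nat.dvd_prime_pow Nat.prime_two).mp hn2
  have hsmall : i ≤ 1 ∨ j ≤ 1 := by
    by_contra hc
    push_neg at hc
    obtain ⟨hi2, hj2⟩ := hc
    have h4a : (4 : ℤ) ∣ a - 3 := by
      have h4 : (4 : ℕ) ∣ (a - 3).natAbs := by
        rw [hi]; exact pow_dvd_pow 2 hi2
      exact Int.dvd_natAbs.mp (by exact_mod_cast h4)
    have h4b : (4 : ℤ) ∣ a + 3 := by
      have h4 : (4 : ℕ) ∣ (a + 3).natAbs := by
        rw [hj]; exact pow_dvd_pow 2 hj2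
      exact Int.dvd_natAbs.mp (by exact_mod_cast h4)
    omega
  have hbound : -5 ≤ a ∧ a ≤ 5 := by
    rcases hsmall with hs | hs
    · have : (a - 3).natAbs ≤ 2 := by
        rw [hi]
        calc 2 ^ i ≤ 2 ^ 1 := Nat.pow_le_pow_right (by norm_num) hs
        _ = 2 := rfl
      omega
    · have : (a + 3).natAbs ≤ 2 := by
        rw [hj]
        calc 2 ^ j ≤ 2 ^ 1 := Nat.pow_le_pow_right (by norm_num) hs
        _ = 2 := rfl
      omega
  obtain ⟨hb1, hb2⟩ := hbound
  have hk4 : k ≤ 4 := by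
    by_contra hk
    push_neg at hk
    have h32 : (32 : ℤ) ≤ 2 ^ k := by
      calc (32 : ℤ) = 2 ^ 5 := by norm_num
      _ ≤ 2 ^ k := pow_le_pow_right₀ (by norm_num) hk
    rcases h with h' | h' <;> nlinarith [sq_nonneg a]
  clear hprod hd1 hd2 hn1 hn2 hi hj hik hjk hsmall
  interval_cases k <;> interval_cases a <;> omega
end

section
/- Let E be an elliptic curve over ℚ admitting a rational point of order 4. Then there exist coprime integers s and t with s > 0 such that E is isomorphic over ℚ (via an admissible change of Weierstrass variables) to the Weierstrass curve y² + t·x·y − s·t²·y = x³ − s·t·x²; in particular the discriminant s⁴·t⁷·(16s + t) of this equation is nonzero. -/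
/-!
Translate a point `P = (x, y)` of order 4 to the origin and its tangent line to `Y = 0`. The curve
becomes `Y² + a₁XY + a₃Y = X³ + a₂X²`, on which `2P = (-a₂, a₁a₂ - a₃)`; since `2P` has order 2 it
equals its negative, which forces `a₃ = a₁a₂`, and `a₃ ≠ 0` because `P` itself is not 2-torsion.
Scaling by `u = a₁ / t`, where `s / t = -a₂ / a₁²` in lowest terms, gives the normal form.
-/

namespace WeierstrassCurve

section NormalForm

variable {R : Type*} [CommRing R]

/-- Tate's normal form `Y² + XY - bY = X³ - bX²` with `b = s / t`, rescaled by `u = t⁻¹`. -/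
def fourTorsionNF (s t : R) : WeierstrassCurve R :=
  ⟨t, -s * t, -s * t ^ 2, 0, 0⟩

lemma fourTorsionNF_Δ (s t : R) : (fourTorsionNF s t).Δ = s ^ 4 * t ^ 7 * (16 * s + t) := by
  simp only [fourTorsionNF, Δ, b₂, b₄, b₆, b₈]
  ring

end NormalForm

namespace Affine

variable {F : Type*} [Field F] [DecidableEq F] {W : Affine F}

lemma Point.two_nsmul_some_eq_zero_iff {x y : F} (h : W.Nonsingular x y) :
    2 • Point.some x y h = 0 ↔ y = W.negY x y := by
  rw [two_nsmul, add_eq_zero_iff_eq_neg, Point.neg_some, Point.some.injEq]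
  simp

lemma exists_nonsingular_of_addOrderOf_eq_four {P : W.Point} (hP : addOrderOf P = 4) :
    ∃ x y, W.Nonsingular x y ∧ y ≠ W.negY x y ∧
      W.addY x x y (W.slope x x y y) =
        W.negY (W.addX x x (W.slope x x y y)) (W.addY x x y (W.slope x x y y)) := by
  have h2P : 2 • P ≠ 0 := fun h ↦ by
    have := addOrderOf_dvd_of_nsmul_eq_zero h
    rw [hP] at this
    omega
  have h4P : 2 • 2 • P = 0 := by
    rw [smul_smul, show 2 * 2 = addOrderOf P by omega]
    exact addOrderOf_nsmul_eq_zero P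
  cases P with
  | zero => exact absurd (nsmul_zero 2) h2P
  | some x y h =>
    have hy : y ≠ W.negY x y := mt (Point.two_nsmul_some_eq_zero_iff h).mpr h2P
    rw [two_nsmul (Point.some x y h), Point.add_self_of_Y_ne hy,
      Point.two_nsmul_some_eq_zero_iff] at h4P
    exact ⟨x, y, h, hy, h4P⟩

end Affine

variable {F : Type*} [Field F] {W : WeierstrassCurve F}

lemma smul_eq_fourTorsionNF {u : Fˣ} {s t : F} (h₁ : W.a₁ = u * t) (h₂ : W.a₂ = -s * t * u ^ 2)
    (h₃ : W.a₃ = W.a₁ * W.a₂) (h₄ : W.a₄ = 0) (h₆ : W.a₆ = 0) :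
    (⟨u, 0, 0, 0⟩ : VariableChange F) • W = fourTorsionNF s t := by
  ext <;> simp only [variableChange_a₁, variableChange_a₂, variableChange_a₃, variableChange_a₄,
    variableChange_a₆, fourTorsionNF, h₃, h₁, h₂, h₄, h₆, Units.val_inv_eq_inv_val] <;>
    field_simp <;> ring

variable [DecidableEq F] (W)

/-- Sends `(x, y)` to the origin and the tangent line of `W` at `(x, y)` to `Y = 0`. -/
def toTangentAt (x y : F) : VariableChange F :=
  ⟨1, x, W.toAffine.slope x x y y, y⟩

variable {W} {x y : F}

lemma toTangentAt_a₃ : (W.toTangentAt x y • W).a₃ = y - W.toAffine.negY x y := by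
  simp only [toTangentAt, variableChange_a₃, inv_one, Units.val_one, one_pow, one_mul,
    Affine.negY]
  ring

lemma toTangentAt_a₄ (hy : y ≠ W.toAffine.negY x y) : (W.toTangentAt x y • W).a₄ = 0 := by
  have hslope := W.toAffine.slope_of_Y_ne rfl hy
  rw [eq_div_iff (sub_ne_zero.mpr hy), Affine.negY] at hslope
  simp only [toTangentAt, variableChange_a₄, inv_one, Units.val_one, one_pow, one_mul]
  linear_combination -hslope

lemma toTangentAt_a₆ (h : W.toAffine.Equation x y) : (W.toTangentAt x y • W).a₆ = 0 := by
  rw [Affine.equation_iff] at h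
  simp only [toTangentAt, variableChange_a₆, inv_one, Units.val_one, one_pow, one_mul]
  linear_combination -h

lemma toTangentAt_a₃_eq_a₁_mul_a₂
    (h2 : W.toAffine.addY x x y (W.toAffine.slope x x y y) =
      W.toAffine.negY (W.toAffine.addX x x (W.toAffine.slope x x y y))
        (W.toAffine.addY x x y (W.toAffine.slope x x y y))) :
    (W.toTangentAt x y • W).a₃ = (W.toTangentAt x y • W).a₁ * (W.toTangentAt x y • W).a₂ := by
  simp only [Affine.addY, Affine.negAddY, Affine.negY, Affine.addX] at h2
  simp only [toTangentAt, variableChange_a₁, variableChange_a₂, variableChange_a₃, inv_one,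
    Units.val_one, one_pow, one_mul]
  linear_combination -h2

theorem exists_variableChange_eq_fourTorsionNF {P : W.toAffine.Point}
    (hP : addOrderOf P = 4) :
    ∃ b : F, b ≠ 0 ∧ ∀ s t : F, t ≠ 0 → s = b * t →
      ∃ C : VariableChange F, C • W = fourTorsionNF s t := by
  obtain ⟨x, y, h, hy, h2⟩ := Affine.exists_nonsingular_of_addOrderOf_eq_four hP
  have ha₃ := toTangentAt_a₃_eq_a₁_mul_a₂ h2
  have ha₁₂ : (W.toTangentAt x y • W).a₁ * (W.toTangentAt x y • W).a₂ ≠ 0 := by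
    rw [← ha₃, toTangentAt_a₃]
    exact sub_ne_zero.mpr hy
  have ha₄ := toTangentAt_a₄ hy
  have ha₆ := toTangentAt_a₆ h.1
  generalize W.toTangentAt x y = C at *
  obtain ⟨ha₁, ha₂⟩ := mul_ne_zero_iff.mp ha₁₂
  refine ⟨-(C • W).a₂ / (C • W).a₁ ^ 2, by simp [ha₁, ha₂], fun s t ht hst ↦
    ⟨⟨Units.mk0 ((C • W).a₁ / t) (div_ne_zero ha₁ ht), 0, 0, 0⟩ * C, ?_⟩⟩
  rw [mul_smul]
  refine smul_eq_fourTorsionNF ?_ ?_ ha₃ ha₄ ha₆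
  · simp [ht]
  · simp only [hst, Units.val_mk0]
    field_simp

end WeierstrassCurve

lemma Rat.exists_isCoprime_pos_eq_mul {q : ℚ} (hq : q ≠ 0) :
    ∃ s t : ℤ, IsCoprime s t ∧ 0 < s ∧ (t : ℚ) ≠ 0 ∧ (s : ℚ) = q * t := by
  have hden : (q.den : ℚ) ≠ 0 := by positivity
  rcases hq.lt_or_gt with hneg | hpos
  · refine ⟨-q.num, -q.den, q.isCoprime_num_den.neg_neg, by simp [Rat.num_neg.mpr hneg],
      by simp, ?_⟩
    push_cast
    rw [mul_neg, Rat.mul_den_eq_num]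
  · exact ⟨q.num, q.den, q.isCoprime_num_den, Rat.num_pos.mpr hpos, hden,
      (Rat.mul_den_eq_num q).symm⟩

open WeierstrassCurve in
theorem exists_normal_form_of_four_torsion (E : WeierstrassCurve ℚ) [E.IsElliptic]
    (hP : ∃ P : E.toAffine.Point, addOrderOf P = 4) :
    ∃ s t : ℤ, IsCoprime s t ∧ 0 < s ∧
      (∃ C : WeierstrassCurve.VariableChange ℚ,
        (C • E : WeierstrassCurve ℚ) =
          ⟨(t : ℚ), -(s : ℚ) * (t : ℚ), -(s : ℚ) * (t : ℚ) ^ 2, 0, 0⟩) ∧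
      (s : ℚ) ^ 4 * (t : ℚ) ^ 7 * (16 * (s : ℚ) + (t : ℚ)) ≠ 0 := by
  obtain ⟨P, hP⟩ := hP
  obtain ⟨b, hb, hnf⟩ := exists_variableChange_eq_fourTorsionNF hP
  obtain ⟨s, t, hst, hs, ht, hbst⟩ := Rat.exists_isCoprime_pos_eq_mul hb
  obtain ⟨C, hC⟩ := hnf s t ht hbst
  refine ⟨s, t, hst, hs, ⟨C, hC⟩, ?_⟩
  rw [← fourTorsionNF_Δ, ← hC]
  exact (C • E).isUnit_Δ.ne_zero
end
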